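/- A d-periodic trajectory with period λ ≥ 0 is consistent for a P-TEG with matrices A⁰, A¹ (entries in ℝ_{≥0} ∪ {-∞}) and B⁰, B¹ (entries in ℝ_{≥0} ∪ {+∞}) if and only if the single max-plus inequality ((T_P ⊗ᵗ P) ⊕ (T_I ⊗ᵗ I) ⊕ (T_C ⊗ᵗ C)) ⊗ x̃ ⪯ x̃ has a solution x̃ ∈ ℝ^{dn}, where P = (B¹)^♯, I = A¹ ⊕ E, C = A⁰ ⊕ (B⁰)^♯, T_C = E_d, and T_P, T_I are the d×d cyclic shift matrices with corner weights dλ and -dλ respectively. -/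

import Mathlib

/-- Dual multiplication `⊙` on `ℝ̄`: like `+`, but `+∞` is absorbing. -/
noncomputable def dualAdd (a b : EReal) : EReal := if a = ⊤ ∨ b = ⊤ then ⊤ else a + b

/-- Max-plus identity matrix. -/
noncomputable def mpIdE (n : ℕ) : Matrix (Fin n) (Fin n) EReal :=
  fun i j => if i = j then 0 else ⊥

/-- A trajectory `x : ℕ → ℝⁿ` is consistent for the P-TEG `(A⁰, A¹, B⁰, B¹)` if it is
nondecreasing and for all `k`, `A⁰ ⊗ x(k) ⪯ x(k) ⪯ B⁰ ⊙ x(k)` and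
`A¹ ⊗ x(k) ⪯ x(k+1) ⪯ B¹ ⊙ x(k)`. -/
def Consistent {n : ℕ} (A0 A1 B0 B1 : Matrix (Fin n) (Fin n) EReal)
    (x : ℕ → Fin n → ℝ) : Prop :=
  ∀ k : ℕ,
    (∀ i, (⨆ j, A0 i j + (x k j : EReal)) ≤ (x k i : EReal)) ∧
    (∀ i, (x k i : EReal) ≤ ⨅ j, dualAdd (B0 i j) (x k j)) ∧
    (∀ i, (⨆ j, A1 i j + (x k j : EReal)) ≤ (x (k + 1) i : EReal)) ∧
    (∀ i, (x (k + 1) i : EReal) ≤ ⨅ j, dualAdd (B1 i j) (x k j)) ∧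
    (∀ i, x k i ≤ x (k + 1) i)

/-- `x` is `d`-periodic with period `λ`: `x(k+d) = dλ + x(k)` entrywise. -/
def DPeriodic {n : ℕ} (d : ℕ) (lam : ℝ) (x : ℕ → Fin n → ℝ) : Prop :=
  ∀ k i, x (k + d) i = (d : ℝ) * lam + x k i

/-- The cyclic shift matrix `T_P(λ)` (0-based indices), over `ℝ̄`. -/
noncomputable def TPE (d : ℕ) (lam : ℝ) : Matrix (Fin d) (Fin d) EReal :=
  fun i j => if (i : ℕ) + 1 = (j : ℕ) then 0
    else if (i : ℕ) = d - 1 ∧ (j : ℕ) = 0 then (((d : ℝ) * lam : ℝ) : EReal) else ⊥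

/-- The cyclic shift matrix `T_I(λ)` (0-based indices), over `ℝ̄`. -/
noncomputable def TIE (d : ℕ) (lam : ℝ) : Matrix (Fin d) (Fin d) EReal :=
  fun i j => if (j : ℕ) + 1 = (i : ℕ) then 0
    else if (i : ℕ) = 0 ∧ (j : ℕ) = d - 1 then ((-((d : ℝ) * lam) : ℝ) : EReal) else ⊥

/-!
Both sides are systems of entrywise inequalities `M i j + u j ≤ v i`. Residuating the
`⊙`-constraints into `♯`-constraints, a trajectory is consistent iff every step satisfies
`C ⊗ x(k) ⪯ x(k)`, `I ⊗ x(k) ⪯ x(k+1)` and `P ⊗ x(k+1) ⪯ x(k)`. These step conditions are invariant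
under adding the same constant to both vectors, so for a `d`-periodic trajectory it suffices to
check them for `k < d`; those `d` steps are exactly the block rows of the lifted inequality for
`x̃ = (x(0), …, x(d-1))`, the corner weights `±dλ` of `T_P` and `T_I` turning `x(0)` into
`x(d) = dλ + x(0)`. Conversely every `x̃` extends to a `d`-periodic trajectory.
-/

open Matrix

lemma neg_add_le_iff_le_dualAdd (b : EReal) (u v : ℝ) :
    -b + u ≤ v ↔ (u : EReal) ≤ dualAdd b v := by
  induction b with
  | bot => simp [dualAdd]
  | coe b =>
    rw [dualAdd, if_neg (by simp), ← EReal.coe_neg, ← EReal.coe_add, ← EReal.coe_add,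
      EReal.coe_le_coe_iff, EReal.coe_le_coe_iff]
    constructor <;> intro h <;> linarith
  | top => simp [dualAdd]

lemma EReal.coe_add_add_coe (c : ℝ) (m : EReal) (u : ℝ) :
    (c : EReal) + m + u = m + ((c + u : ℝ) : EReal) := by
  push_cast
  abel

lemma EReal.add_coe_add_le_coe_add_iff (m : EReal) (c u v : ℝ) :
    m + ((c + u : ℝ) : EReal) ≤ ((c + v : ℝ) : EReal) ↔ m + u ≤ v := by
  rw [← coe_add_add_coe, EReal.coe_add, add_assoc]
  exact (EReal.addLECancellable_coe c).add_le_add_iff_left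

lemma mpIdE_self {n : ℕ} (i : Fin n) : mpIdE n i i = 0 := if_pos rfl

lemma mpIdE_of_ne {n : ℕ} {i j : Fin n} (h : i ≠ j) : mpIdE n i j = ⊥ := if_neg h

/-- The max-plus inequality `M ⊗ u ⪯ v` between real vectors. -/
def MaxPlusLE {ι κ : Type*} (M : Matrix ι κ EReal) (u : κ → ℝ) (v : ι → ℝ) : Prop :=
  ∀ i j, M i j + u j ≤ v i

/-- The residuation `B♯ = -Bᵀ`. -/
noncomputable def sharp {ι κ : Type*} (B : Matrix ι κ EReal) : Matrix κ ι EReal :=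
  fun i j => -B j i

/-- The max-plus sum `M ⊕ N`. -/
noncomputable def maxPlusSum {ι κ : Type*} (M N : Matrix ι κ EReal) : Matrix ι κ EReal :=
  fun i j => max (M i j) (N i j)

section MaxPlusLE

variable {ι κ : Type*} {M N : Matrix ι κ EReal} {u : κ → ℝ} {v : ι → ℝ}

lemma maxPlusLE_iff_forall_iSup_le : MaxPlusLE M u v ↔ ∀ i, (⨆ j, M i j + u j) ≤ v i := by
  simp only [MaxPlusLE, iSup_le_iff]

lemma maxPlusLE_sharp_iff {B : Matrix κ ι EReal} :
    MaxPlusLE (sharp B) u v ↔ ∀ j, (u j : EReal) ≤ ⨅ i, dualAdd (B j i) (v i) := by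
  simp only [MaxPlusLE, sharp, neg_add_le_iff_le_dualAdd, le_iInf_iff]
  exact forall_comm

lemma maxPlusLE_maxPlusSum_iff :
    MaxPlusLE (maxPlusSum M N) u v ↔ MaxPlusLE M u v ∧ MaxPlusLE N u v := by
  simp only [MaxPlusLE, maxPlusSum, ← max_add_add_right, max_le_iff, forall_and]

lemma maxPlusLE_add_const_iff (c : ℝ) :
    MaxPlusLE M (fun j => c + u j) (fun i => c + v i) ↔ MaxPlusLE M u v := by
  simp only [MaxPlusLE, EReal.add_coe_add_le_coe_add_iff]

lemma maxPlusLE_zero_add_iff : MaxPlusLE (fun i j => 0 + M i j) u v ↔ MaxPlusLE M u v := by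
  simp only [zero_add]

lemma maxPlusLE_bot_add : MaxPlusLE (fun i j => ⊥ + M i j) u v := fun _ _ => by simp

lemma maxPlusLE_coe_add_iff (c : ℝ) :
    MaxPlusLE (fun i j => (c : EReal) + M i j) u v ↔ MaxPlusLE M (fun j => c + u j) v := by
  simp only [MaxPlusLE, EReal.coe_add_add_coe]

lemma maxPlusLE_kroneckerMap_iff {ι' κ' : Type*} {T : Matrix ι' κ' EReal} {u : κ' × κ → ℝ}
    {v : ι' × ι → ℝ} :
    MaxPlusLE (kroneckerMap (· + ·) T M) u v ↔
      ∀ a b, MaxPlusLE (fun i j => T a b + M i j) (fun j => u (b, j)) (fun i => v (a, i)) :=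
  ⟨fun h a b i j => h (a, i) (b, j), fun h p q => h p.1 q.1 p.2 q.2⟩

lemma maxPlusLE_mpIdE_iff {n : ℕ} {u v : Fin n → ℝ} : MaxPlusLE (mpIdE n) u v ↔ u ≤ v := by
  refine ⟨fun h i => by simpa [mpIdE_self] using h i i, fun h i j => ?_⟩
  rcases eq_or_ne i j with rfl | hij
  · simpa [mpIdE_self] using h i
  · simp [mpIdE_of_ne hij]

end MaxPlusLE

section PTEG

variable {n : ℕ} {A0 A1 B0 B1 : Matrix (Fin n) (Fin n) EReal}

/-- One step `x(k) ↦ x(k+1)` of a consistent trajectory, written with the matrices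
`C = A⁰ ⊕ (B⁰)♯`, `I = A¹ ⊕ E` and `P = (B¹)♯`. -/
def ConsistentStep (A0 A1 B0 B1 : Matrix (Fin n) (Fin n) EReal) (u v : Fin n → ℝ) : Prop :=
  MaxPlusLE (maxPlusSum A0 (sharp B0)) u u ∧
    MaxPlusLE (maxPlusSum A1 (mpIdE n)) u v ∧ MaxPlusLE (sharp B1) v u

lemma consistent_iff_forall_consistentStep {x : ℕ → Fin n → ℝ} :
    Consistent A0 A1 B0 B1 x ↔ ∀ k, ConsistentStep A0 A1 B0 B1 (x k) (x (k + 1)) := by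
  refine forall_congr' fun k => ?_
  simp only [ConsistentStep, maxPlusLE_maxPlusSum_iff, maxPlusLE_iff_forall_iSup_le (M := A0),
    maxPlusLE_iff_forall_iSup_le (M := A1), maxPlusLE_sharp_iff, maxPlusLE_mpIdE_iff, Pi.le_def]
  tauto

lemma consistentStep_add_const_iff (c : ℝ) (u v : Fin n → ℝ) :
    ConsistentStep A0 A1 B0 B1 (fun i => c + u i) (fun i => c + v i) ↔
      ConsistentStep A0 A1 B0 B1 u v :=
  and_congr (maxPlusLE_add_const_iff c)
    (and_congr (maxPlusLE_add_const_iff c) (maxPlusLE_add_const_iff c))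

lemma DPeriodic.forall_iff_forall_lt {d : ℕ} {lam : ℝ} {x : ℕ → Fin n → ℝ}
    (hx : DPeriodic d lam x) (hd : 0 < d) {R : (Fin n → ℝ) → (Fin n → ℝ) → Prop}
    (hR : ∀ (c : ℝ) u v, R (fun i => c + u i) (fun i => c + v i) ↔ R u v) :
    (∀ k, R (x k) (x (k + 1))) ↔ ∀ k < d, R (x k) (x (k + 1)) := by
  refine ⟨fun h k _ => h k, fun h k => ?_⟩
  have shift (k : ℕ) : x (k + d) = fun i => d * lam + x k i := funext (hx k)
  have reduce (r m : ℕ) : R (x (r + d * m)) (x (r + d * m + 1)) ↔ R (x r) (x (r + 1)) := by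
    induction m with
    | zero => simp
    | succ m ih =>
      rw [mul_add_one, ← add_assoc, add_right_comm _ d, shift, shift, hR, ih]
  rw [← Nat.mod_add_div k d, reduce]
  exact h _ (Nat.mod_lt k hd)

lemma exists_dPeriodic_extension {d : ℕ} (hd : 0 < d) (lam : ℝ) (xt : Fin d × Fin n → ℝ) :
    ∃ x : ℕ → Fin n → ℝ, DPeriodic d lam x ∧ (fun p : Fin d × Fin n => x p.1 p.2) = xt := by
  refine ⟨fun k i => (k / d : ℕ) * (d * lam) + xt (⟨k % d, Nat.mod_lt k hd⟩, i),
    fun k i => ?_, funext fun p => ?_⟩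
  · simp only [Nat.add_div_right k hd, Nat.add_mod_right]
    push_cast
    ring
  · simp [Nat.div_eq_of_lt p.1.2, Nat.mod_eq_of_lt p.1.2]

end PTEG

section Lift

variable {n d : ℕ} {lam : ℝ} {M : Matrix (Fin n) (Fin n) EReal} {x : ℕ → Fin n → ℝ}

lemma TPE_of_succ_eq {a b : Fin d} (h : (a : ℕ) + 1 = b) : TPE d lam a b = 0 := if_pos h

lemma TPE_of_succ_eq_of_eq_zero {a b : Fin d} (ha : (a : ℕ) + 1 = d) (hb : (b : ℕ) = 0) :
    TPE d lam a b = ((d * lam : ℝ) : EReal) := by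
  rw [TPE, if_neg (by omega), if_pos ⟨by omega, hb⟩]

lemma TIE_of_succ_eq {a b : Fin d} (h : (b : ℕ) + 1 = a) : TIE d lam a b = 0 := if_pos h

lemma TIE_of_eq_zero_of_succ_eq {a b : Fin d} (ha : (a : ℕ) = 0) (hb : (b : ℕ) + 1 = d) :
    TIE d lam a b = ((-(d * lam) : ℝ) : EReal) := by
  rw [TIE, if_neg (by omega), if_pos ⟨ha, by omega⟩]

lemma maxPlusLE_kroneckerMap_mpIdE_iff :
    MaxPlusLE (kroneckerMap (· + ·) (mpIdE d) M) (fun p => x p.1 p.2) (fun p => x p.1 p.2) ↔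
      ∀ k < d, MaxPlusLE M (x k) (x k) := by
  rw [maxPlusLE_kroneckerMap_iff]
  refine ⟨fun h k hk => ?_, fun h a b => ?_⟩
  · simpa only [mpIdE_self, maxPlusLE_zero_add_iff] using h ⟨k, hk⟩ ⟨k, hk⟩
  · rcases eq_or_ne a b with rfl | hab
    · simpa only [mpIdE_self, maxPlusLE_zero_add_iff] using h a a.2
    · simpa only [mpIdE_of_ne hab] using maxPlusLE_bot_add

lemma maxPlusLE_kroneckerMap_TPE_iff (hd : 0 < d) (hx : x d = fun i => d * lam + x 0 i) :
    MaxPlusLE (kroneckerMap (· + ·) (TPE d lam) M) (fun p => x p.1 p.2) (fun p => x p.1 p.2) ↔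
      ∀ k < d, MaxPlusLE M (x (k + 1)) (x k) := by
  rw [maxPlusLE_kroneckerMap_iff]
  refine ⟨fun h k hk => ?_, fun h a b => ?_⟩
  · rcases (show k + 1 ≤ d from hk).lt_or_eq with hlt | hlast
    · simpa only [TPE_of_succ_eq (a := ⟨k, hk⟩) (b := ⟨k + 1, hlt⟩) rfl, maxPlusLE_zero_add_iff]
        using h ⟨k, hk⟩ ⟨k + 1, hlt⟩
    · rw [hlast, hx]
      simpa only [TPE_of_succ_eq_of_eq_zero (a := ⟨k, hk⟩) (b := ⟨0, hd⟩) hlast rfl,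
        maxPlusLE_coe_add_iff] using h ⟨k, hk⟩ ⟨0, hd⟩
  · simp only [TPE]
    split_ifs with hnext hcorner
    · rw [maxPlusLE_zero_add_iff, ← hnext]
      exact h a a.2
    · have hlast : (a : ℕ) + 1 = d := by omega
      rw [maxPlusLE_coe_add_iff, hcorner.2]
      have := h a a.2
      rwa [hlast, hx] at this
    · exact maxPlusLE_bot_add

lemma maxPlusLE_kroneckerMap_TIE_iff (hd : 0 < d) (hx : x d = fun i => d * lam + x 0 i) :
    MaxPlusLE (kroneckerMap (· + ·) (TIE d lam) M) (fun p => x p.1 p.2) (fun p => x p.1 p.2) ↔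
      ∀ k < d, MaxPlusLE M (x k) (x (k + 1)) := by
  rw [maxPlusLE_kroneckerMap_iff]
  refine ⟨fun h k hk => ?_, fun h a b => ?_⟩
  · rcases (show k + 1 ≤ d from hk).lt_or_eq with hlt | hlast
    · simpa only [TIE_of_succ_eq (a := ⟨k + 1, hlt⟩) (b := ⟨k, hk⟩) rfl, maxPlusLE_zero_add_iff]
        using h ⟨k + 1, hlt⟩ ⟨k, hk⟩
    · rw [hlast, hx, ← maxPlusLE_add_const_iff (-(d * lam))]
      simpa only [TIE_of_eq_zero_of_succ_eq (a := ⟨0, hd⟩) (b := ⟨k, hk⟩) rfl hlast,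
        maxPlusLE_coe_add_iff, neg_add_cancel_left] using h ⟨0, hd⟩ ⟨k, hk⟩
  · simp only [TIE]
    split_ifs with hnext hcorner
    · rw [maxPlusLE_zero_add_iff, ← hnext]
      exact h b b.2
    · have hlast : (b : ℕ) + 1 = d := by omega
      rw [maxPlusLE_coe_add_iff, hcorner.1, ← maxPlusLE_add_const_iff (d * lam)]
      simp only [add_neg_cancel_left]
      have := h b b.2
      rwa [hlast, hx] at this
    · exact maxPlusLE_bot_add

end Lift

/-- The paper's `(T_P ⊗ᵗ P) ⊕ (T_I ⊗ᵗ I) ⊕ (T_C ⊗ᵗ C)`. -/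
noncomputable def liftedMatrix {n : ℕ} (d : ℕ) (lam : ℝ)
    (A0 A1 B0 B1 : Matrix (Fin n) (Fin n) EReal) :
    Matrix (Fin d × Fin n) (Fin d × Fin n) EReal :=
  maxPlusSum (kroneckerMap (· + ·) (TPE d lam) (sharp B1))
    (maxPlusSum (kroneckerMap (· + ·) (TIE d lam) (maxPlusSum A1 (mpIdE n)))
      (kroneckerMap (· + ·) (mpIdE d) (maxPlusSum A0 (sharp B0))))

lemma maxPlusLE_liftedMatrix_iff {n d : ℕ} {lam : ℝ} {A0 A1 B0 B1 : Matrix (Fin n) (Fin n) EReal}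
    {x : ℕ → Fin n → ℝ} (hd : 0 < d) (hx : x d = fun i => d * lam + x 0 i) :
    MaxPlusLE (liftedMatrix d lam A0 A1 B0 B1) (fun p => x p.1 p.2) (fun p => x p.1 p.2) ↔
      ∀ k < d, ConsistentStep A0 A1 B0 B1 (x k) (x (k + 1)) := by
  rw [liftedMatrix, maxPlusLE_maxPlusSum_iff, maxPlusLE_maxPlusSum_iff,
    maxPlusLE_kroneckerMap_TPE_iff hd hx, maxPlusLE_kroneckerMap_TIE_iff hd hx,
    maxPlusLE_kroneckerMap_mpIdE_iff]
  exact ⟨fun ⟨hP, hI, hC⟩ k hk => ⟨hC k hk, hI k hk, hP k hk⟩,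
    fun h => ⟨fun k hk => (h k hk).2.2, fun k hk => (h k hk).2.1, fun k hk => (h k hk).1⟩⟩

theorem stmt13_general {n : ℕ} (d : ℕ) (hd : 0 < d) (lam : ℝ)
    (A0 A1 B0 B1 : Matrix (Fin n) (Fin n) EReal) :
    (∃ x : ℕ → Fin n → ℝ, Consistent A0 A1 B0 B1 x ∧ DPeriodic d lam x) ↔
      ∃ xt : Fin d × Fin n → ℝ,
        ∀ p : Fin d × Fin n,
          (⨆ q : Fin d × Fin n,
            (max (TPE d lam p.1 q.1 + (-(B1 q.2 p.2)))
              (max (TIE d lam p.1 q.1 + max (A1 p.2 q.2) (mpIdE n p.2 q.2))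
                (mpIdE d p.1 q.1 + max (A0 p.2 q.2) (-(B0 q.2 p.2))))) + (xt q : EReal))
            ≤ (xt p : EReal) := by
  have consistent_iff {x : ℕ → Fin n → ℝ} (hx : DPeriodic d lam x) :
      Consistent A0 A1 B0 B1 x ↔
        MaxPlusLE (liftedMatrix d lam A0 A1 B0 B1) (fun p => x p.1 p.2) (fun p => x p.1 p.2) := by
    rw [consistent_iff_forall_consistentStep,
      hx.forall_iff_forall_lt hd consistentStep_add_const_iff,
      maxPlusLE_liftedMatrix_iff hd (funext fun i => by simpa using hx 0 i)]
  constructor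
  · rintro ⟨x, hc, hx⟩
    exact ⟨_, maxPlusLE_iff_forall_iSup_le.mp ((consistent_iff hx).mp hc)⟩
  · rintro ⟨xt, hxt⟩
    obtain ⟨x, hx, rfl⟩ := exists_dPeriodic_extension hd lam xt
    exact ⟨x, (consistent_iff hx).mpr (maxPlusLE_iff_forall_iSup_le.mpr hxt), hx⟩

/-- A `d`-periodic trajectory with period `λ ≥ 0` is consistent for the P-TEG
`(A⁰, A¹, B⁰, B¹)` iff the single max-plus inequality
`((T_P ⊗ᵗ P) ⊕ (T_I ⊗ᵗ I) ⊕ (T_C ⊗ᵗ C)) ⊗ x̃ ⪯ x̃`, with `P = (B¹)♯`, `I = A¹ ⊕ E`,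
`C = A⁰ ⊕ (B⁰)♯` and `T_C = E`, has a real solution `x̃ ∈ ℝ^{dn}`. -/
theorem stmt13 {n : ℕ} (d : ℕ) (hd : 0 < d) (lam : ℝ) (hlam : 0 ≤ lam)
    (A0 A1 B0 B1 : Matrix (Fin n) (Fin n) EReal)
    (hA0 : ∀ i j, A0 i j ≠ ⊤ ∧ (A0 i j ≠ ⊥ → 0 ≤ A0 i j))
    (hA1 : ∀ i j, A1 i j ≠ ⊤ ∧ (A1 i j ≠ ⊥ → 0 ≤ A1 i j))
    (hB0 : ∀ i j, B0 i j ≠ ⊥ ∧ (B0 i j ≠ ⊤ → 0 ≤ B0 i j))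
    (hB1 : ∀ i j, B1 i j ≠ ⊥ ∧ (B1 i j ≠ ⊤ → 0 ≤ B1 i j)) :
    (∃ x : ℕ → Fin n → ℝ, Consistent A0 A1 B0 B1 x ∧ DPeriodic d lam x) ↔
      ∃ xt : Fin d × Fin n → ℝ,
        ∀ p : Fin d × Fin n,
          (⨆ q : Fin d × Fin n,
            (max (TPE d lam p.1 q.1 + (-(B1 q.2 p.2)))
              (max (TIE d lam p.1 q.1 + max (A1 p.2 q.2) (mpIdE n p.2 q.2))
                (mpIdE d p.1 q.1 + max (A0 p.2 q.2) (-(B0 q.2 p.2))))) + (xt q : EReal))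
            ≤ (xt p : EReal) :=
  stmt13_general d hd lam A0 A1 B0 B1
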